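/- arXiv:2212.09254 — 2 statements merged into one kernel-verified Lean document; each statement's English description precedes it below -/
import Mathlib

section
/- Let z' ∈ ℝ^L and let P_{[0,1]} act coordinatewise. If ∑ᵢ P_{[0,1]}(z'ᵢ) ≤ k, then the coordinatewise clipped vector P_{[0,1]}(z') equals the Euclidean projection of z' onto C₁ = {z ∈ [0,1]^L : ∑ᵢ zᵢ ≤ k}. -/
/-!
Projecting onto the box `[0,1]^L` is coordinatewise clipping. When the clipped point meets the
budget it lies in `C₁ ⊆ [0,1]^L`, so it is also the nearest point of `C₁`.
-/

/-- The clipping map onto `[0,1]`. -/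
noncomputable def clip01 (x : ℝ) : ℝ := min (max x 0) 1

lemma sq_min_max_sub_le {a b t x : ℝ} (hax : a ≤ x) (hxb : x ≤ b) :
    (min (max t a) b - t) ^ 2 ≤ (x - t) ^ 2 := by
  rcases le_total t a with hta | hat
  · rw [max_eq_right hta, min_eq_left (hax.trans hxb)]
    nlinarith
  · rw [max_eq_left hat]
    rcases le_total t b with htb | hbt
    · rw [min_eq_left htb, sub_self, zero_pow two_ne_zero]
      exact sq_nonneg _
    · rw [min_eq_right hbt]
      nlinarith

lemma clip01_mem_Icc (t : ℝ) : clip01 t ∈ Set.Icc 0 1 :=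
  ⟨le_min (le_max_right _ _) zero_le_one, min_le_right _ _⟩

lemma sum_sq_clip01_sub_le {ι : Type*} [Fintype ι] (z x : ι → ℝ) (hx : ∀ i, x i ∈ Set.Icc 0 1) :
    ∑ i, (clip01 (z i) - z i) ^ 2 ≤ ∑ i, (x i - z i) ^ 2 :=
  Finset.sum_le_sum fun i _ => sq_min_max_sub_le (hx i).1 (hx i).2

theorem clip_is_projection_onto_budget_set_general (L : ℕ) (k : ℝ)
    (z' : Fin L → ℝ) (hsum : ∑ i, clip01 (z' i) ≤ k) :
    ((∀ i, 0 ≤ clip01 (z' i) ∧ clip01 (z' i) ≤ 1) ∧ ∑ i, clip01 (z' i) ≤ k) ∧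
    ∀ x : Fin L → ℝ, ((∀ i, 0 ≤ x i ∧ x i ≤ 1) ∧ ∑ i, x i ≤ k) →
      ∑ i, (clip01 (z' i) - z' i) ^ 2 ≤ ∑ i, (x i - z' i) ^ 2 :=
  ⟨⟨fun i => clip01_mem_Icc (z' i), hsum⟩,
    fun x hx => sum_sq_clip01_sub_le z' x hx.1⟩

theorem clip_is_projection_onto_budget_set (L : ℕ) (k : ℝ) (hk : 0 ≤ k)
    (z' : Fin L → ℝ) (hsum : ∑ i, clip01 (z' i) ≤ k) :
    ((∀ i, 0 ≤ clip01 (z' i) ∧ clip01 (z' i) ≤ 1) ∧ ∑ i, clip01 (z' i) ≤ k) ∧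
    ∀ x : Fin L → ℝ, ((∀ i, 0 ≤ x i ∧ x i ≤ 1) ∧ ∑ i, x i ≤ k) →
      ∑ i, (clip01 (z' i) - z' i) ^ 2 ≤ ∑ i, (x i - z' i) ^ 2 :=
  clip_is_projection_onto_budget_set_general L k z' hsum
end

section
/- Let u' ∈ ℝ^m and suppose υ ∈ ℝ satisfies ∑ⱼ P_{[0,1]}(u'ⱼ − υ) = 1. Then the vector with coordinates P_{[0,1]}(u'ⱼ − υ) equals the Euclidean projection of u' onto the simplex C₂ = {u ∈ [0,1]^m : ∑ⱼ uⱼ = 1}. -/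
open Finset

lemma clip01_nonneg (x : ℝ) : 0 ≤ clip01 x :=
  le_min (le_max_right _ _) zero_le_one

lemma clip01_le_one (x : ℝ) : clip01 x ≤ 1 :=
  min_le_right _ _

lemma sub_clip01_mul_clip01_sub_nonneg {u : ℝ} (hu₀ : 0 ≤ u) (hu₁ : u ≤ 1) (t : ℝ) :
    0 ≤ (u - clip01 t) * (clip01 t - t) := by
  unfold clip01
  rcases le_total t 0 with ht₀ | ht₀
  · rw [max_eq_right ht₀, min_eq_left zero_le_one]
    nlinarith
  rcases le_total t 1 with ht₁ | ht₁
  · simp [max_eq_left ht₀, min_eq_left ht₁]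
  · rw [max_eq_left ht₀, min_eq_right ht₁]
    nlinarith

section FiniteSums

variable {ι : Type*} [Fintype ι]

lemma sum_sq_sub_le_of_sum_mul_nonneg {p u y : ι → ℝ}
    (h : 0 ≤ ∑ i, (u i - p i) * (p i - y i)) :
    ∑ i, (p i - y i) ^ 2 ≤ ∑ i, (u i - y i) ^ 2 := by
  have hexpand : ∑ i, (u i - y i) ^ 2
      = ∑ i, (u i - p i) ^ 2 + 2 * ∑ i, (u i - p i) * (p i - y i) + ∑ i, (p i - y i) ^ 2 := by
    rw [mul_sum, ← sum_add_distrib, ← sum_add_distrib]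
    exact sum_congr rfl fun i _ => by ring
  have hsq : 0 ≤ ∑ i, (u i - p i) ^ 2 := sum_nonneg fun i _ => sq_nonneg _
  linarith

lemma sum_sub_mul_sub_sub_const_of_sum_eq {p u : ι → ℝ} (hsum : ∑ i, u i = ∑ i, p i)
    (y : ι → ℝ) (c : ℝ) :
    ∑ i, (u i - p i) * (p i - (y i - c)) = ∑ i, (u i - p i) * (p i - y i) := by
  have hzero : ∑ i, (u i - p i) * c = 0 := by
    rw [← sum_mul, sum_sub_distrib, hsum, sub_self, zero_mul]
  rw [← sub_eq_zero, ← sum_sub_distrib, ← hzero]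
  exact sum_congr rfl fun i _ => by ring

lemma sum_sq_clip01_sub_le_s6 {y u : ι → ℝ} {c : ℝ} (hu : ∀ i, 0 ≤ u i ∧ u i ≤ 1)
    (hsum : ∑ i, u i = ∑ i, clip01 (y i - c)) :
    ∑ i, (clip01 (y i - c) - y i) ^ 2 ≤ ∑ i, (u i - y i) ^ 2 := by
  apply sum_sq_sub_le_of_sum_mul_nonneg
  rw [← sum_sub_mul_sub_sub_const_of_sum_eq hsum y c]
  exact sum_nonneg fun i _ => sub_clip01_mul_clip01_sub_nonneg (hu i).1 (hu i).2 _

end FiniteSums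

theorem shifted_clip_is_projection_onto_simplex_general (m : ℕ)
    (u' : Fin m → ℝ) (υ : ℝ) (hsum : ∑ j, clip01 (u' j - υ) = 1) :
    ((∀ j, 0 ≤ clip01 (u' j - υ) ∧ clip01 (u' j - υ) ≤ 1) ∧
      ∑ j, clip01 (u' j - υ) = 1) ∧
    ∀ u : Fin m → ℝ, ((∀ j, 0 ≤ u j ∧ u j ≤ 1) ∧ ∑ j, u j = 1) →
      ∑ j, (clip01 (u' j - υ) - u' j) ^ 2 ≤ ∑ j, (u j - u' j) ^ 2 := by
  refine ⟨⟨fun j => ⟨clip01_nonneg _, clip01_le_one _⟩, hsum⟩, ?_⟩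
  rintro u ⟨hu, husum⟩
  exact sum_sq_clip01_sub_le_s6 hu (husum.trans hsum.symm)

theorem shifted_clip_is_projection_onto_simplex (m : ℕ) (hm : 1 ≤ m)
    (u' : Fin m → ℝ) (υ : ℝ) (hsum : ∑ j, clip01 (u' j - υ) = 1) :
    ((∀ j, 0 ≤ clip01 (u' j - υ) ∧ clip01 (u' j - υ) ≤ 1) ∧
      ∑ j, clip01 (u' j - υ) = 1) ∧
    ∀ u : Fin m → ℝ, ((∀ j, 0 ≤ u j ∧ u j ≤ 1) ∧ ∑ j, u j = 1) →
      ∑ j, (clip01 (u' j - υ) - u' j) ^ 2 ≤ ∑ j, (u j - u' j) ^ 2 :=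
  shifted_clip_is_projection_onto_simplex_general m u' υ hsum
end
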